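/- arXiv:2006.03328 — 3 statements merged into one kernel-verified Lean document; each statement's English description precedes it below -/
import Mathlib

section
/- Let M : (Ω,𝒜,P) → ℝⁿ be a Markov kernel with finite mean, and M₁ : (Ω,𝒜,P) → (Ω₁,𝒜₁), M₂ : (Ω,𝒜,P) → (Ω₂,𝒜₂) Markov kernels. If M₂ is independent of the diagonal product M × M₁ (i.e., P^{M×M₁×M₂} = P^{M×M₁} × P^{M₂}), then the conditional expectation of M given M₁ × M₂ equals the conditional expectation of M given M₁, viewed as a function of the first coordinate: E_P(M | M₁ × M₂)(ω₁, ω₂) = E_P(M | M₁)(ω₁) for P^{M₁×M₂}-almost every (ω₁, ω₂). -/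
open MeasureTheory ProbabilityTheory

/-!
Two versions of a conditional expectation agree a.e. as soon as they have the same integral over
every set of a generating π-system, here the measurable rectangles `A₁ ×ˢ A₂`. On a rectangle,
independence of `M₂` from `M × M₁` factors the defining integral of `E_P(M | M₁ × M₂)` as
`P^{M₂}(A₂)` times the defining integral of `E_P(M | M₁)` over `A₁`; since it also gives
`P^{M₁×M₂} = P^{M₁} × P^{M₂}`, the integral of `g₁ ∘ fst` over the rectangle factors the same way.
Integrability of the versions `g₁`, `g₁₂` comes for free: their set integrals are bounded by
`E‖M‖`, and in finite dimension this forces integrability.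
-/

lemma enorm_eq_ofReal_add_ofReal_neg (t : ℝ) : ‖t‖ₑ = ENNReal.ofReal t + ENNReal.ofReal (-t) := by
  rw [Real.enorm_eq_ofReal_abs]
  rcases le_total 0 t with ht | ht
  · rw [abs_of_nonneg ht, ENNReal.ofReal_of_nonpos (neg_nonpos.mpr ht), add_zero]
  · rw [abs_of_nonpos ht, ENNReal.ofReal_of_nonpos ht, zero_add]

section SetIntegralBound

variable {α E : Type*} {mα : MeasurableSpace α} {μ : Measure α} [IsFiniteMeasure μ]
  [NormedAddCommGroup E] [NormedSpace ℝ E] [CompleteSpace E] {g : α → E} {C : ℝ}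

lemma lintegral_ofReal_le_of_norm_setIntegral_le (hg : StronglyMeasurable g)
    (h : ∀ s, MeasurableSet s → ‖∫ x in s, g x ∂μ‖ ≤ C) (ℓ : StrongDual ℝ E) (hℓ : ‖ℓ‖ ≤ 1) :
    ∫⁻ x, ENNReal.ofReal (ℓ (g x)) ∂μ ≤ ENNReal.ofReal C := by
  have hℓg : StronglyMeasurable fun x => ℓ (g x) := ℓ.continuous.comp_stronglyMeasurable hg
  set S := {x | 0 ≤ ℓ (g x)}
  -- truncating `g` makes it integrable, so its set integrals are no longer junk values
  set s : ℕ → Set α := fun N => {x | ‖g x‖ ≤ N} ∩ S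
  have hs : ∀ N, MeasurableSet (s N) := fun N =>
    (measurableSet_le hg.norm.measurable measurable_const).inter
      (measurableSet_le measurable_const hℓg.measurable)
  have hS : ⋃ N, s N = S := by
    ext x
    simp only [s, Set.mem_iUnion, Set.mem_inter_iff, Set.mem_ofPred_eq]
    exact ⟨fun ⟨_, _, hx⟩ => hx, fun hx => ⟨_, (exists_nat_ge ‖g x‖).choose_spec, hx⟩⟩
  have hmono : Monotone s := fun N N' hNN' =>
    Set.inter_subset_inter_left _ fun x (hx : ‖g x‖ ≤ N) => hx.trans (Nat.cast_le.mpr hNN')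
  have hbound : ∀ N, ∫⁻ x in s N, ENNReal.ofReal (ℓ (g x)) ∂μ ≤ ENNReal.ofReal C := by
    intro N
    have hint : IntegrableOn g (s N) μ :=
      Measure.integrableOn_of_bounded (M := N) (measure_ne_top _ _) hg.aestronglyMeasurable
        ((ae_restrict_iff' (hs N)).mpr (ae_of_all _ fun x hx => hx.1))
    rw [← ofReal_integral_eq_lintegral_ofReal (ℓ.integrable_comp hint)
      ((ae_restrict_iff' (hs N)).mpr (ae_of_all _ fun x hx => hx.2)),
      ℓ.integral_comp_comm hint]
    refine ENNReal.ofReal_le_ofReal ((le_abs_self _).trans ?_)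
    calc |ℓ (∫ x in s N, g x ∂μ)| ≤ ‖ℓ‖ * ‖∫ x in s N, g x ∂μ‖ := ℓ.le_opNorm _
      _ ≤ 1 * C := mul_le_mul hℓ (h _ (hs N)) (norm_nonneg _) zero_le_one
      _ = C := one_mul C
  calc ∫⁻ x, ENNReal.ofReal (ℓ (g x)) ∂μ = ∫⁻ x in S, ENNReal.ofReal (ℓ (g x)) ∂μ := by
        refine (setLIntegral_eq_of_support_subset fun x hx => ?_).symm
        exact le_of_lt (ENNReal.ofReal_pos.mp (pos_iff_ne_zero.mpr hx))
    _ = ⨆ N, ∫⁻ x in s N, ENNReal.ofReal (ℓ (g x)) ∂μ := by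
        rw [← hS, ← withDensity_apply' _, hmono.measure_iUnion]
        simp_rw [withDensity_apply' _]
    _ ≤ ENNReal.ofReal C := iSup_le hbound

lemma EuclideanSpace.integrable_of_norm_setIntegral_le {ι : Type*} [Fintype ι]
    {g : α → EuclideanSpace ℝ ι} (hg : StronglyMeasurable g)
    (h : ∀ s, MeasurableSet s → ‖∫ x in s, g x ∂μ‖ ≤ C) : Integrable g μ := by
  refine integrable_piLp_iff.mpr fun i => ?_
  have hgi := (EuclideanSpace.proj (𝕜 := ℝ) i).continuous.comp_stronglyMeasurable hg
  refine ⟨hgi.aestronglyMeasurable, ?_⟩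
  have hproj : ‖(EuclideanSpace.proj i : StrongDual ℝ (EuclideanSpace ℝ ι))‖ ≤ 1 :=
    ContinuousLinearMap.opNorm_le_bound _ zero_le_one fun x => by
      simpa using PiLp.norm_apply_le x i
  calc ∫⁻ x, ‖g x i‖ₑ ∂μ
      = ∫⁻ x, ENNReal.ofReal (EuclideanSpace.proj i (g x))
          + ENNReal.ofReal ((-EuclideanSpace.proj i) (g x)) ∂μ := by
        simp [enorm_eq_ofReal_add_ofReal_neg]
    _ ≤ ENNReal.ofReal C + ENNReal.ofReal C := by
        rw [lintegral_add_left]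
        · exact add_le_add (lintegral_ofReal_le_of_norm_setIntegral_le hg h _ hproj)
            (lintegral_ofReal_le_of_norm_setIntegral_le hg h _ (by rwa [norm_neg]))
        · exact hgi.measurable.ennreal_ofReal
    _ < ⊤ := by simp

end SetIntegralBound

namespace MeasureTheory.Measure

variable {α β E : Type*} {mα : MeasurableSpace α} {mβ : MeasurableSpace β}
  [NormedAddCommGroup E] [NormedSpace ℝ E] {μ : Measure α} {κ : Kernel α β} {f : β → E}

lemma integral_bind (hf : Integrable f (κ ∘ₘ μ)) :
    ∫ y, f y ∂(κ ∘ₘ μ) = ∫ x, ∫ y, f y ∂κ x ∂μ := by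
  rw [comp_eq_comp_const_apply] at hf ⊢
  rw [Kernel.integral_comp hf, Kernel.const_apply]

lemma integrable_integral_of_integrable_comp (hf : Integrable f (κ ∘ₘ μ)) :
    Integrable (fun x => ∫ y, f y ∂κ x) μ := by
  rw [comp_eq_comp_const_apply] at hf
  simpa using hf.integral_comp

end MeasureTheory.Measure

section Prod

variable {β γ E : Type*} {mβ : MeasurableSpace β} {mγ : MeasurableSpace γ}
  [NormedAddCommGroup E] [NormedSpace ℝ E] (μ : Measure β) (ν : Measure γ) [SFinite μ] [SFinite ν]
  (f : β → E)

lemma setIntegral_prod_fun_fst (s : Set β) (t : Set γ) :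
    ∫ z in s ×ˢ t, f z.1 ∂(μ.prod ν) = (ν t).toReal • ∫ y in s, f y ∂μ := by
  rw [← Measure.prod_restrict, integral_fun_fst, measureReal_restrict_apply_univ, measureReal_def]

lemma integral_indicator_univ_prod {A : Set γ} (hA : MeasurableSet A) :
    ∫ z, (Set.univ ×ˢ A).indicator (fun z => f z.1) z ∂(μ.prod ν) = (ν A).toReal • ∫ y, f y ∂μ := by
  rw [integral_indicator (MeasurableSet.univ.prod hA), setIntegral_prod_fun_fst, setIntegral_univ]

end Prod

namespace ProbabilityTheory

variable {Ω α β γ E : Type*} {mΩ : MeasurableSpace Ω} {mα : MeasurableSpace α}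
  {mβ : MeasurableSpace β} {mγ : MeasurableSpace γ} {P : Measure Ω}

def IndepKernels (P : Measure Ω) (κ : Kernel Ω β) (η : Kernel Ω γ) : Prop :=
  (κ ×ₖ η) ∘ₘ P = (κ ∘ₘ P).prod (η ∘ₘ P)

lemma IndepKernels.of_prod_left [SFinite P] {κ : Kernel Ω α} [IsMarkovKernel κ] {η₁ : Kernel Ω β}
    [IsSFiniteKernel η₁] {η₂ : Kernel Ω γ} [IsSFiniteKernel η₂]
    (h : IndepKernels P (κ ×ₖ η₁) η₂) : IndepKernels P η₁ η₂ := by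
  have h_map := congrArg (Measure.map (Prod.map Prod.snd id)) h
  rwa [Measure.map_comp _ _ (by fun_prop), ← Kernel.map_prod_map _ _ measurable_snd measurable_id,
    ← Measure.map_prod_map _ _ measurable_snd measurable_id, Measure.map_comp _ _ measurable_snd,
    Kernel.map_id, Measure.map_id, ← Kernel.snd_eq, Kernel.snd_prod] at h_map

lemma IndepKernels.integral_toReal_smul [IsFiniteMeasure P] {κ : Kernel Ω β} [IsSFiniteKernel κ]
    {η : Kernel Ω γ} [IsFiniteKernel η] (h : IndepKernels P κ η) [NormedAddCommGroup E]
    [NormedSpace ℝ E] {f : β → E} (hf : Integrable f (κ ∘ₘ P)) {A : Set γ} (hA : MeasurableSet A) :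
    ∫ ω, (η ω A).toReal • ∫ y, f y ∂κ ω ∂P = ((η ∘ₘ P) A).toReal • ∫ ω, ∫ y, f y ∂κ ω ∂P := by
  set F := (Set.univ ×ˢ A).indicator fun z : β × γ => f z.1
  have hF : Integrable F ((κ ×ₖ η) ∘ₘ P) := by
    rw [h]
    exact (hf.comp_fst _).indicator (MeasurableSet.univ.prod hA)
  calc ∫ ω, (η ω A).toReal • ∫ y, f y ∂κ ω ∂P = ∫ ω, ∫ z, F z ∂(κ ×ₖ η) ω ∂P := by
        simp_rw [F, Kernel.prod_apply, integral_indicator_univ_prod _ _ _ hA]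
    _ = ∫ z, F z ∂((κ ∘ₘ P).prod (η ∘ₘ P)) := by rw [← Measure.integral_bind hF, h]
    _ = ((η ∘ₘ P) A).toReal • ∫ ω, ∫ y, f y ∂κ ω ∂P := by
        rw [integral_indicator_univ_prod _ _ _ hA, Measure.integral_bind hf]

lemma IndepKernels.integral_toReal_prod_smul_integral [IsFiniteMeasure P] [NormedAddCommGroup E]
    [NormedSpace ℝ E] [MeasurableSpace E] {M : Kernel Ω E} [IsSFiniteKernel M]
    {M₁ : Kernel Ω β} [IsMarkovKernel M₁] {M₂ : Kernel Ω γ} [IsFiniteKernel M₂]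
    (h : IndepKernels P (M ×ₖ M₁) M₂) (hM : Integrable id (M ∘ₘ P))
    {A₁ : Set β} (hA₁ : MeasurableSet A₁) {A₂ : Set γ} (hA₂ : MeasurableSet A₂) :
    ∫ ω, ((M₁ ×ₖ M₂) ω (A₁ ×ˢ A₂)).toReal • ∫ x, x ∂M ω ∂P
      = ((M₂ ∘ₘ P) A₂).toReal • ∫ ω, (M₁ ω A₁).toReal • ∫ x, x ∂M ω ∂P := by
  have hmarg : ((M ×ₖ M₁) ∘ₘ P).map Prod.fst = M ∘ₘ P := by
    rw [Measure.map_comp _ _ measurable_fst, ← Kernel.fst_eq, Kernel.fst_prod]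
  have hfst : Integrable Prod.fst ((M ×ₖ M₁) ∘ₘ P) := by
    rw [← hmarg] at hM
    exact (integrable_map_measure hM.1 measurable_fst.aemeasurable).mp hM
  have hmean : ∀ ω, (M₁ ω A₁).toReal • ∫ x, x ∂M ω
      = ∫ z, (Set.univ ×ˢ A₁).indicator Prod.fst z ∂(M ×ₖ M₁) ω := fun ω => by
    rw [Kernel.prod_apply, ← integral_indicator_univ_prod _ _ (fun x => x) hA₁]
  have hrect : ∀ ω, ((M₁ ×ₖ M₂) ω (A₁ ×ˢ A₂)).toReal • ∫ x, x ∂M ω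
      = (M₂ ω A₂).toReal • ∫ z, (Set.univ ×ˢ A₁).indicator Prod.fst z ∂(M ×ₖ M₁) ω := fun ω => by
    rw [Kernel.prod_apply, Measure.prod_prod, ENNReal.toReal_mul, mul_comm, mul_smul, hmean]
  simp_rw [hrect, hmean]
  exact h.integral_toReal_smul (hfst.indicator (MeasurableSet.univ.prod hA₁)) hA₂

lemma norm_integral_toReal_smul_le [NormedAddCommGroup E] [NormedSpace ℝ E] (κ : Kernel Ω β)
    [IsMarkovKernel κ] {m : Ω → E} (hm : Integrable m P) (s : Set β) :
    ‖∫ ω, (κ ω s).toReal • m ω ∂P‖ ≤ ∫ ω, ‖m ω‖ ∂P := by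
  refine (norm_integral_le_integral_norm _).trans
    (integral_mono_of_nonneg (ae_of_all _ fun _ => norm_nonneg _) hm.norm (ae_of_all _ fun ω => ?_))
  dsimp only
  rw [norm_smul, Real.norm_of_nonneg ENNReal.toReal_nonneg]
  exact mul_le_of_le_one_left (norm_nonneg _) (ENNReal.toReal_le_of_le_ofReal zero_le_one
    (by simpa using prob_le_one))

end ProbabilityTheory

/-- Main theorem: if `M₂ ⊥⊥ M × M₁` then `E_P(M | M₁ × M₂) = E_P(M | M₁)` (the latter viewed
as a function of the first coordinate), `P^{M₁ × M₂}`-almost everywhere. -/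
theorem stmt_9 {Ω Ω₁ Ω₂ : Type*} {𝒜 : MeasurableSpace Ω}
    {𝒜₁ : MeasurableSpace Ω₁} {𝒜₂ : MeasurableSpace Ω₂} {n : ℕ}
    (P : Measure Ω) [IsProbabilityMeasure P]
    (M : Kernel Ω (EuclideanSpace ℝ (Fin n))) [IsMarkovKernel M]
    (M₁ : Kernel Ω Ω₁) [IsMarkovKernel M₁]
    (M₂ : Kernel Ω Ω₂) [IsMarkovKernel M₂]
    (hmean : ∫⁻ ω, ∫⁻ x, ‖x‖₊ ∂(M ω) ∂P < ⊤)
    -- independence of M₂ and M × M₁ : P^{M×M₁×M₂} = P^{M×M₁} × P^{M₂}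
    (hind : P.bind (fun ω => ((M ×ₖ M₁) ×ₖ M₂) ω) =
      (P.bind (fun ω => (M ×ₖ M₁) ω)).prod (P.bind (fun ω => M₂ ω)))
    -- g₁ is (a version of) E_P(M | M₁)
    (g₁ : Ω₁ → EuclideanSpace ℝ (Fin n)) (hg₁m : Measurable g₁)
    (hg₁ : ∀ A₁ : Set Ω₁, MeasurableSet A₁ →
      ∫ ω, (M₁ ω A₁).toReal • (∫ x, x ∂(M ω)) ∂P =
        ∫ ω₁ in A₁, g₁ ω₁ ∂(P.bind (fun ω => M₁ ω)))
    -- g₁₂ is (a version of) E_P(M | M₁ × M₂)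
    (g₁₂ : Ω₁ × Ω₂ → EuclideanSpace ℝ (Fin n)) (hg₁₂m : Measurable g₁₂)
    (hg₁₂ : ∀ B : Set (Ω₁ × Ω₂), MeasurableSet B →
      ∫ ω, ((M₁ ×ₖ M₂) ω B).toReal • (∫ x, x ∂(M ω)) ∂P =
        ∫ p in B, g₁₂ p ∂(P.bind (fun ω => (M₁ ×ₖ M₂) ω))) :
    g₁₂ =ᵐ[P.bind (fun ω => (M₁ ×ₖ M₂) ω)] fun p => g₁ p.1 := by
  set Q₁ := P.bind fun ω => M₁ ω
  set Q := P.bind fun ω => (M₁ ×ₖ M₂) ω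
  have hM : Integrable id (M ∘ₘ P) :=
    ⟨aestronglyMeasurable_id, by
      rw [HasFiniteIntegral, Measure.lintegral_bind M.measurable.aemeasurable
        measurable_id.enorm.aemeasurable]
      simpa only [id, enorm_eq_nnnorm] using hmean⟩
  have hm : Integrable (fun ω => ∫ x, x ∂M ω) P := Measure.integrable_integral_of_integrable_comp hM
  have hg₁int : Integrable g₁ Q₁ :=
    EuclideanSpace.integrable_of_norm_setIntegral_le hg₁m.stronglyMeasurable fun s hs =>
      hg₁ s hs ▸ norm_integral_toReal_smul_le M₁ hm s
  have hg₁₂int : Integrable g₁₂ Q :=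
    EuclideanSpace.integrable_of_norm_setIntegral_le hg₁₂m.stronglyMeasurable fun s hs =>
      hg₁₂ s hs ▸ norm_integral_toReal_smul_le (M₁ ×ₖ M₂) hm s
  have hQ : Q = Q₁.prod (P.bind fun ω => M₂ ω) := IndepKernels.of_prod_left (κ := M) hind
  have hg₁fst : Integrable (fun p => g₁ p.1) Q := hQ ▸ hg₁int.comp_fst _
  have hrect : ∀ A₁, MeasurableSet A₁ → ∀ A₂, MeasurableSet A₂ →
      Q.withDensityᵥ g₁₂ (A₁ ×ˢ A₂) = Q.withDensityᵥ (fun p => g₁ p.1) (A₁ ×ˢ A₂) := by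
    intro A₁ hA₁ A₂ hA₂
    rw [withDensityᵥ_apply hg₁₂int (hA₁.prod hA₂), withDensityᵥ_apply hg₁fst (hA₁.prod hA₂),
      ← hg₁₂ _ (hA₁.prod hA₂), IndepKernels.integral_toReal_prod_smul_integral hind hM hA₁ hA₂,
      hg₁ _ hA₁, hQ, setIntegral_prod_fun_fst]
  refine hg₁₂int.ae_eq_of_withDensityᵥ_eq hg₁fst (VectorMeasure.ext_of_generateFrom _ ?_
    generateFrom_prod.symm isPiSystem_prod ?_)
  · rintro _ ⟨A₁, hA₁, A₂, hA₂, rfl⟩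
    exact hrect A₁ hA₁ A₂ hA₂
  · simpa using hrect _ MeasurableSet.univ _ MeasurableSet.univ
end

section
/- Let X₁, X₂, X₃, X be random variables with values in σ-finite measure spaces (Ω₁,μ₁), (Ω₂,μ₂), (Ω₃,μ₃), (ℝⁿ,μ), having densities f₁, f₂, f₃ and joint densities f₁₃, f₂₃ (w.r.t. the corresponding product measures) and g₃ (the (μ×μ₃)-density of (X,X₃)). Let M = P^{X|X₃}, Mᵢ = P^{Xᵢ|X₃} be the conditional distribution kernels on (Ω₃,𝒜₃,P^{X₃}). Then M₂ is independent of M × M₁ (w.r.t. P^{X₃}) if and only if ∫_{Ω₃} f₂₃(ω₂,ω₃) g₃(x,ω₃) f₁₃(ω₁,ω₃) / f₃(ω₃)² dμ₃(ω₃) = (∫_{Ω₃} f₂₃(ω₂,ω₃) dμ₃(ω₃)) · (∫_{Ω₃} g₃(x,ω₃) f₁₃(ω₁,ω₃) / f₃(ω₃) dμ₃(ω₃)) for μ₂×μ×μ₁-almost every (ω₂, x, ω₁). -/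
/-!
Write `Q = μ₃.withDensity f₃` for the law of `X₃`. If `(Q ⊗ₘ N).map Prod.swap` has density `F`
with respect to `μ_β × μ₃`, then for each measurable `A`, `f₃ ω * N ω A = ∫_A F(·, ω) dμ_β` for
`μ₃`-a.e. `ω`: the kernel has density `F / f₃`. Hence `K ×ₖ L` has joint density `F G / f₃`, and
the mixture `Q.bind N` has the density `∫ F(·, ω) dμ₃`. Applying this to `M ×ₖ M₁` and then to
`(M ×ₖ M₁) ×ₖ M₂` turns both sides of the independence identity into σ-finite measures with
densities on `(ℝⁿ × Ω₁) × Ω₂`, which agree iff the densities agree almost everywhere.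
-/

open MeasureTheory ProbabilityTheory
open scoped ENNReal

lemma ENNReal.mul_mul_mul_div_self {a b c : ℝ≥0∞} (hc : c ≠ ∞) :
    c * a * (c * b) / c = c * (a * b) := by
  rcases eq_or_ne c 0 with rfl | hc₀
  · simp
  · calc c * a * (c * b) / c = c * c⁻¹ * (c * (a * b)) := by rw [div_eq_mul_inv]; ring
      _ = c * (a * b) := by rw [ENNReal.mul_inv_cancel hc₀ hc, one_mul]

namespace ProbabilityTheory

variable {Ω β γ : Type*} {mΩ : MeasurableSpace Ω} {mβ : MeasurableSpace β}
  {mγ : MeasurableSpace γ}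

lemma map_swap_compProd_apply_prod {Q : Measure Ω} [SFinite Q] {N : Kernel Ω β}
    [IsSFiniteKernel N] {A : Set β} {A₃ : Set Ω} (hA : MeasurableSet A) (hA₃ : MeasurableSet A₃) :
    (Q ⊗ₘ N).map Prod.swap (A ×ˢ A₃) = ∫⁻ ω in A₃, N ω A ∂Q := by
  rw [Measure.map_apply measurable_swap (hA.prod hA₃), Set.preimage_swap_prod,
    Measure.compProd_apply_prod hA₃ hA]

lemma map_swap_compProd_eq_of_forall_prod {Q : Measure Ω} [IsFiniteMeasure Q] {N : Kernel Ω β}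
    [IsFiniteKernel N] {ν : Measure (β × Ω)}
    (h : ∀ (A : Set β) (A₃ : Set Ω), MeasurableSet A → MeasurableSet A₃ →
      ν (A ×ˢ A₃) = ∫⁻ ω in A₃, N ω A ∂Q) :
    (Q ⊗ₘ N).map Prod.swap = ν :=
  Measure.ext_prod fun hA hA₃ => by rw [map_swap_compProd_apply_prod hA hA₃, h _ _ hA hA₃]

variable {μ₃ : Measure Ω} {μb : Measure β} [SFinite μb]
  {μc : Measure γ} [SFinite μc]

lemma withDensity_prod_apply_prod [SFinite μ₃] {F : β × Ω → ℝ≥0∞} (hF : Measurable F)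
    {A : Set β} {A₃ : Set Ω} (hA : MeasurableSet A) (hA₃ : MeasurableSet A₃) :
    (μb.prod μ₃).withDensity F (A ×ˢ A₃) = ∫⁻ ω in A₃, ∫⁻ b in A, F (b, ω) ∂μb ∂μ₃ := by
  rw [withDensity_apply _ (hA.prod hA₃), setLIntegral_prod_symm _ hF.aemeasurable]

lemma mul_kernel_ae_eq_setLIntegral [SigmaFinite μ₃] {f₃ : Ω → ℝ≥0∞} (hf₃ : Measurable f₃)
    {N : Kernel Ω β} [IsSFiniteKernel N] {F : β × Ω → ℝ≥0∞} (hF : Measurable F)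
    (hN : ((μ₃.withDensity f₃) ⊗ₘ N).map Prod.swap = (μb.prod μ₃).withDensity F)
    {A : Set β} (hA : MeasurableSet A) :
    (fun ω => f₃ ω * N ω A) =ᵐ[μ₃] fun ω => ∫⁻ b in A, F (b, ω) ∂μb := by
  refine ae_eq_of_forall_setLIntegral_eq_of_sigmaFinite (hf₃.mul (N.measurable_coe hA))
    hF.lintegral_prod_left' fun s hs _ => ?_
  calc ∫⁻ ω in s, f₃ ω * N ω A ∂μ₃ = ∫⁻ ω in s, N ω A ∂(μ₃.withDensity f₃) :=
        (setLIntegral_withDensity_eq_setLIntegral_mul _ hf₃ (N.measurable_coe hA) hs).symm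
    _ = ∫⁻ ω in s, ∫⁻ b in A, F (b, ω) ∂μb ∂μ₃ := by
        rw [← map_swap_compProd_apply_prod hA hs, hN, withDensity_prod_apply_prod hF hA hs]

lemma setLIntegral_prod_mul_div {F : β × Ω → ℝ≥0∞} {G : γ × Ω → ℝ≥0∞} (hF : Measurable F)
    (hG : Measurable G) (f₃ : Ω → ℝ≥0∞) {B : Set β} {C : Set γ} (ω : Ω) :
    ∫⁻ r in B ×ˢ C, F (r.1, ω) * G (r.2, ω) / f₃ ω ∂(μb.prod μc) =
      (∫⁻ b in B, F (b, ω) ∂μb) * (∫⁻ c in C, G (c, ω) ∂μc) / f₃ ω := by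
  simp_rw [div_eq_mul_inv]
  rw [← Measure.prod_restrict, lintegral_mul_const _ (by fun_prop),
    lintegral_prod_mul (f := fun b => F (b, ω)) (g := fun c => G (c, ω)) (by fun_prop)
      (by fun_prop)]

lemma map_swap_compProd_prod_eq_withDensity [SigmaFinite μ₃] {f₃ : Ω → ℝ≥0∞}
    (hf₃ : Measurable f₃) [IsFiniteMeasure (μ₃.withDensity f₃)] {K : Kernel Ω β} {L : Kernel Ω γ}
    [IsFiniteKernel K] [IsFiniteKernel L] {F : β × Ω → ℝ≥0∞} {G : γ × Ω → ℝ≥0∞}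
    (hF : Measurable F) (hG : Measurable G)
    (hK : ((μ₃.withDensity f₃) ⊗ₘ K).map Prod.swap = (μb.prod μ₃).withDensity F)
    (hL : ((μ₃.withDensity f₃) ⊗ₘ L).map Prod.swap = (μc.prod μ₃).withDensity G) :
    ((μ₃.withDensity f₃) ⊗ₘ (K ×ₖ L)).map Prod.swap =
      ((μb.prod μc).prod μ₃).withDensity fun p => F (p.1.1, p.2) * G (p.1.2, p.2) / f₃ p.2 := by
  have hf₃_ne_top : ∀ᵐ ω ∂μ₃, f₃ ω ≠ ∞ := by
    refine (ae_lt_top hf₃ ?_).mono fun ω => ne_of_lt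
    simpa using measure_ne_top (μ₃.withDensity f₃) Set.univ
  refine Measure.ext_prod₃_iff'.2 fun {B C A₃} hB hC hA₃ => ?_
  rw [map_swap_compProd_apply_prod (hB.prod hC) hA₃,
    withDensity_prod_apply_prod (by fun_prop) (hB.prod hC) hA₃,
    setLIntegral_withDensity_eq_setLIntegral_mul _ hf₃
      ((K ×ₖ L).measurable_coe (hB.prod hC)) hA₃]
  refine setLIntegral_congr_fun_ae hA₃ ?_
  -- Where `f₃ ω = 0`, also `∫_B F(·, ω) = f₃ ω * K ω B` vanishes, so dividing by `f₃ ω` is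
  -- harmless.
  filter_upwards [mul_kernel_ae_eq_setLIntegral hf₃ hF hK hB,
    mul_kernel_ae_eq_setLIntegral hf₃ hG hL hC, hf₃_ne_top] with ω hKω hLω hω _
  rw [setLIntegral_prod_mul_div hF hG, ← hKω, ← hLω, ENNReal.mul_mul_mul_div_self hω,
    Pi.mul_apply, Kernel.prod_apply, Measure.prod_prod]

lemma bind_eq_withDensity_of_map_swap_compProd [SFinite μ₃] {Q : Measure Ω} [SFinite Q]
    {N : Kernel Ω β} [IsSFiniteKernel N] {F : β × Ω → ℝ≥0∞} (hF : Measurable F)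
    (hN : (Q ⊗ₘ N).map Prod.swap = (μb.prod μ₃).withDensity F) :
    Q.bind N = μb.withDensity fun b => ∫⁻ ω, F (b, ω) ∂μ₃ := by
  ext A hA
  rw [← Measure.snd_compProd, ← Measure.fst_map_swap, hN, Measure.fst_apply hA,
    ← Set.prod_univ, withDensity_apply _ (hA.prod .univ), setLIntegral_prod _ hF.aemeasurable,
    Measure.restrict_univ, withDensity_apply _ hA]

end ProbabilityTheory

lemma MeasureTheory.Measure.ae_prod_prod_iff_ae_rotate {α β γ : Type*} {mα : MeasurableSpace α}
    {mβ : MeasurableSpace β} {mγ : MeasurableSpace γ} {μa : Measure α} {μb : Measure β}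
    {μc : Measure γ} [SFinite μa] [SFinite μb] [SFinite μc] {p : (α × β) × γ → Prop} :
    (∀ᵐ q ∂(μa.prod μb).prod μc, p q) ↔ ∀ᵐ q ∂(μc.prod μa).prod μb, p ((q.1.2, q.2), q.1.1) := by
  let e : (γ × α) × β ≃ᵐ (α × β) × γ := MeasurableEquiv.prodAssoc.trans MeasurableEquiv.prodComm
  have he : ((μc.prod μa).prod μb).map e = (μa.prod μb).prod μc := by
    rw [MeasurableEquiv.coe_trans, ← Measure.map_map MeasurableEquiv.prodComm.measurable
      MeasurableEquiv.prodAssoc.measurable, Measure.prodAssoc_prod]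
    exact Measure.prod_swap
  rw [← he, e.measurableEmbedding.ae_map_iff]
  rfl

theorem stmt_12_general {Ω Ω₁ Ω₂ Ω₃ : Type*} {𝒜 : MeasurableSpace Ω}
    {𝒜₁ : MeasurableSpace Ω₁} {𝒜₂ : MeasurableSpace Ω₂} {𝒜₃ : MeasurableSpace Ω₃} {n : ℕ}
    (P : Measure Ω) [IsProbabilityMeasure P]
    (X : Ω → EuclideanSpace ℝ (Fin n)) (X₁ : Ω → Ω₁) (X₂ : Ω → Ω₂) (X₃ : Ω → Ω₃)
    (μ : Measure (EuclideanSpace ℝ (Fin n))) [SigmaFinite μ]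
    (μ₁ : Measure Ω₁) [SigmaFinite μ₁] (μ₂ : Measure Ω₂) [SigmaFinite μ₂]
    (μ₃ : Measure Ω₃) [SigmaFinite μ₃]
    (f₃ : Ω₃ → ℝ≥0∞) (hf₃ : Measurable f₃)
    (f₁₃ : Ω₁ × Ω₃ → ℝ≥0∞) (hf₁₃ : Measurable f₁₃)
    (f₂₃ : Ω₂ × Ω₃ → ℝ≥0∞) (hf₂₃ : Measurable f₂₃)
    (g₃ : EuclideanSpace ℝ (Fin n) × Ω₃ → ℝ≥0∞) (hg₃ : Measurable g₃)
    (hd₃ : P.map X₃ = μ₃.withDensity f₃)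
    (hd₁₃ : P.map (fun ω => (X₁ ω, X₃ ω)) = (μ₁.prod μ₃).withDensity f₁₃)
    (hd₂₃ : P.map (fun ω => (X₂ ω, X₃ ω)) = (μ₂.prod μ₃).withDensity f₂₃)
    (hdg₃ : P.map (fun ω => (X ω, X₃ ω)) = (μ.prod μ₃).withDensity g₃)
    (M : Kernel Ω₃ (EuclideanSpace ℝ (Fin n))) [IsMarkovKernel M]
    (M₁ : Kernel Ω₃ Ω₁) [IsMarkovKernel M₁] (M₂ : Kernel Ω₃ Ω₂) [IsMarkovKernel M₂]
    (hM : ∀ (B : Set (EuclideanSpace ℝ (Fin n))) (A₃ : Set Ω₃),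
      MeasurableSet B → MeasurableSet A₃ →
      P.map (fun ω => (X ω, X₃ ω)) (B ×ˢ A₃) = ∫⁻ ω₃ in A₃, M ω₃ B ∂(P.map X₃))
    (hM₁ : ∀ (A₁ : Set Ω₁) (A₃ : Set Ω₃), MeasurableSet A₁ → MeasurableSet A₃ →
      P.map (fun ω => (X₁ ω, X₃ ω)) (A₁ ×ˢ A₃) = ∫⁻ ω₃ in A₃, M₁ ω₃ A₁ ∂(P.map X₃))
    (hM₂ : ∀ (A₂ : Set Ω₂) (A₃ : Set Ω₃), MeasurableSet A₂ → MeasurableSet A₃ →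
      P.map (fun ω => (X₂ ω, X₃ ω)) (A₂ ×ˢ A₃) = ∫⁻ ω₃ in A₃, M₂ ω₃ A₂ ∂(P.map X₃)) :
    ((P.map X₃).bind (fun ω₃ => ((M ×ₖ M₁) ×ₖ M₂) ω₃) =
        ((P.map X₃).bind (fun ω₃ => (M ×ₖ M₁) ω₃)).prod
          ((P.map X₃).bind (fun ω₃ => M₂ ω₃))) ↔
      (∀ᵐ p ∂((μ₂.prod μ).prod μ₁),
        ∫⁻ ω₃, f₂₃ (p.1.1, ω₃) * g₃ (p.1.2, ω₃) * f₁₃ (p.2, ω₃) / (f₃ ω₃) ^ 2 ∂μ₃ =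
          (∫⁻ ω₃, f₂₃ (p.1.1, ω₃) ∂μ₃) *
            ∫⁻ ω₃, g₃ (p.1.2, ω₃) * f₁₃ (p.2, ω₃) / f₃ ω₃ ∂μ₃) := by
  have : IsFiniteMeasure (μ₃.withDensity f₃) := hd₃ ▸ inferInstance
  have jM : ((μ₃.withDensity f₃) ⊗ₘ M).map Prod.swap = (μ.prod μ₃).withDensity g₃ := by
    rw [← hd₃, ← hdg₃]; exact map_swap_compProd_eq_of_forall_prod hM
  have jM₁ : ((μ₃.withDensity f₃) ⊗ₘ M₁).map Prod.swap = (μ₁.prod μ₃).withDensity f₁₃ := by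
    rw [← hd₃, ← hd₁₃]; exact map_swap_compProd_eq_of_forall_prod hM₁
  have jM₂ : ((μ₃.withDensity f₃) ⊗ₘ M₂).map Prod.swap = (μ₂.prod μ₃).withDensity f₂₃ := by
    rw [← hd₃, ← hd₂₃]; exact map_swap_compProd_eq_of_forall_prod hM₂
  have jMM₁ := map_swap_compProd_prod_eq_withDensity hf₃ hg₃ hf₁₃ jM jM₁
  have jMM₁M₂ := map_swap_compProd_prod_eq_withDensity hf₃ (by fun_prop) hf₂₃ jMM₁ jM₂
  rw [hd₃, bind_eq_withDensity_of_map_swap_compProd (by fun_prop) jMM₁M₂,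
    bind_eq_withDensity_of_map_swap_compProd (by fun_prop) jMM₁,
    bind_eq_withDensity_of_map_swap_compProd hf₂₃ jM₂,
    prod_withDensity (by fun_prop) (by fun_prop),
    withDensity_eq_iff_of_sigmaFinite (by fun_prop) (by fun_prop), Filter.EventuallyEq,
    Measure.ae_prod_prod_iff_ae_rotate]
  refine Filter.eventually_congr (.of_forall fun p => ?_)
  have hintegrand (ω : Ω₃) : g₃ (p.1.2, ω) * f₁₃ (p.2, ω) / f₃ ω * f₂₃ (p.1.1, ω) / f₃ ω =
      f₂₃ (p.1.1, ω) * g₃ (p.1.2, ω) * f₁₃ (p.2, ω) / f₃ ω ^ 2 := by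
    simp only [div_eq_mul_inv, ENNReal.inv_pow]; ring
  dsimp only
  simp_rw [hintegrand, mul_comm (∫⁻ ω, f₂₃ (p.1.1, ω) ∂μ₃)]

/-- In terms of densities: `M₂ ⊥⊥ M × M₁` (w.r.t. `Q = P^{X₃}`) iff the stated integral
identity for the densities holds `μ₂ × μ × μ₁`-a.e. -/
theorem stmt_12 {Ω Ω₁ Ω₂ Ω₃ : Type*} {𝒜 : MeasurableSpace Ω}
    {𝒜₁ : MeasurableSpace Ω₁} {𝒜₂ : MeasurableSpace Ω₂} {𝒜₃ : MeasurableSpace Ω₃} {n : ℕ}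
    (P : Measure Ω) [IsProbabilityMeasure P]
    (X : Ω → EuclideanSpace ℝ (Fin n)) (X₁ : Ω → Ω₁) (X₂ : Ω → Ω₂) (X₃ : Ω → Ω₃)
    (hX : Measurable X) (hX₁ : Measurable X₁) (hX₂ : Measurable X₂) (hX₃ : Measurable X₃)
    (μ : Measure (EuclideanSpace ℝ (Fin n))) [SigmaFinite μ]
    (μ₁ : Measure Ω₁) [SigmaFinite μ₁] (μ₂ : Measure Ω₂) [SigmaFinite μ₂]
    (μ₃ : Measure Ω₃) [SigmaFinite μ₃]
    (f₃ : Ω₃ → ℝ≥0∞) (hf₃ : Measurable f₃)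
    (f₁₃ : Ω₁ × Ω₃ → ℝ≥0∞) (hf₁₃ : Measurable f₁₃)
    (f₂₃ : Ω₂ × Ω₃ → ℝ≥0∞) (hf₂₃ : Measurable f₂₃)
    (g₃ : EuclideanSpace ℝ (Fin n) × Ω₃ → ℝ≥0∞) (hg₃ : Measurable g₃)
    (hd₃ : P.map X₃ = μ₃.withDensity f₃)
    (hd₁₃ : P.map (fun ω => (X₁ ω, X₃ ω)) = (μ₁.prod μ₃).withDensity f₁₃)
    (hd₂₃ : P.map (fun ω => (X₂ ω, X₃ ω)) = (μ₂.prod μ₃).withDensity f₂₃)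
    (hdg₃ : P.map (fun ω => (X ω, X₃ ω)) = (μ.prod μ₃).withDensity g₃)
    (M : Kernel Ω₃ (EuclideanSpace ℝ (Fin n))) [IsMarkovKernel M]
    (M₁ : Kernel Ω₃ Ω₁) [IsMarkovKernel M₁] (M₂ : Kernel Ω₃ Ω₂) [IsMarkovKernel M₂]
    (hM : ∀ (B : Set (EuclideanSpace ℝ (Fin n))) (A₃ : Set Ω₃),
      MeasurableSet B → MeasurableSet A₃ →
      P.map (fun ω => (X ω, X₃ ω)) (B ×ˢ A₃) = ∫⁻ ω₃ in A₃, M ω₃ B ∂(P.map X₃))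
    (hM₁ : ∀ (A₁ : Set Ω₁) (A₃ : Set Ω₃), MeasurableSet A₁ → MeasurableSet A₃ →
      P.map (fun ω => (X₁ ω, X₃ ω)) (A₁ ×ˢ A₃) = ∫⁻ ω₃ in A₃, M₁ ω₃ A₁ ∂(P.map X₃))
    (hM₂ : ∀ (A₂ : Set Ω₂) (A₃ : Set Ω₃), MeasurableSet A₂ → MeasurableSet A₃ →
      P.map (fun ω => (X₂ ω, X₃ ω)) (A₂ ×ˢ A₃) = ∫⁻ ω₃ in A₃, M₂ ω₃ A₂ ∂(P.map X₃)) :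
    ((P.map X₃).bind (fun ω₃ => ((M ×ₖ M₁) ×ₖ M₂) ω₃) =
        ((P.map X₃).bind (fun ω₃ => (M ×ₖ M₁) ω₃)).prod
          ((P.map X₃).bind (fun ω₃ => M₂ ω₃))) ↔
      (∀ᵐ p ∂((μ₂.prod μ).prod μ₁),
        ∫⁻ ω₃, f₂₃ (p.1.1, ω₃) * g₃ (p.1.2, ω₃) * f₁₃ (p.2, ω₃) / (f₃ ω₃) ^ 2 ∂μ₃ =
          (∫⁻ ω₃, f₂₃ (p.1.1, ω₃) ∂μ₃) *
            ∫⁻ ω₃, g₃ (p.1.2, ω₃) * f₁₃ (p.2, ω₃) / f₃ ω₃ ∂μ₃) :=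
  stmt_12_general (𝒜 := 𝒜) (𝒜₁ := 𝒜₁) (𝒜₂ := 𝒜₂) (𝒜₃ := 𝒜₃) P X X₁ X₂ X₃ μ μ₁ μ₂ μ₃ f₃ hf₃ f₁₃ hf₁₃
    f₂₃ hf₂₃ g₃ hg₃ hd₃ hd₁₃ hd₂₃ hdg₃ M M₁ M₂ hM hM₁ hM₂
end

section
/- With densities as above, the conditional expectation of the kernel M = P^{X|X₃} given the kernel M₁ = P^{X₁|X₃} (both on (Ω₃,𝒜₃,P^{X₃})) is given by E(M|M₁)(ω₁) = ∫_{ℝⁿ} x ∫_{Ω₃} g₃(x,ω₃) f₁₃(ω₁,ω₃) / (f₃(ω₃) f₁(ω₁)) dμ₃(ω₃) dμ(x), for P^{X₁}-almost all ω₁. -/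
/-!
Write `Q = P^{X₃} = f₃ μ₃` and let `π = ∫ M₁(ω₃) ⊗ M(ω₃) dQ(ω₃)` be the law of a pair drawn
independently from `M₁(ω₃)` and `M(ω₃)`. The joint densities give
`f₃ M₁(·, A) = ∫_A f₁₃(·, ω₃) dμ₁` and `f₃ M(·, B) = ∫_B g₃(·, ω₃) dμ` `μ₃`-a.e., so `π` has the
`(μ₁ × μ)`-density `d(ω₁, x) = ∫ g₃(x, ω₃) f₁₃(ω₁, ω₃) / f₃(ω₃) dμ₃`. The left-hand side of the
defining identity of `E(M|M₁)` is `∫_{A₁ × ℝⁿ} x dπ = ∫_{A₁} ∫ x d(ω₁, x) dμ(x) dμ₁(ω₁)`, and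
`d(ω₁, ·)` is `f₁(ω₁)` times the claimed conditional density: where `f₁` vanishes so does
`f₁₃(ω₁, ·)`, since `f₁` is the `μ₃`-marginal of `f₁₃`. Both sides therefore have the same integral
over every `A₁`; as `e` is only measurable, they are compared on the sets `{‖e‖ ≤ N}`.
-/

open MeasureTheory ProbabilityTheory
open scoped ENNReal

theorem ENNReal.mul_mul_eq_mul_mul_mul_inv {x : ℝ≥0∞} (hx : x ≠ ∞) (a b : ℝ≥0∞) :
    x * (a * b) = x * a * (x * b) * x⁻¹ := by
  rcases eq_or_ne x 0 with rfl | hx0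
  · simp
  · calc x * (a * b) = x * x⁻¹ * (x * (a * b)) := by rw [ENNReal.mul_inv_cancel hx0 hx, one_mul]
      _ = x * a * (x * b) * x⁻¹ := by ring

namespace MeasureTheory

variable {α β γ : Type*} [MeasurableSpace α] [MeasurableSpace β] [MeasurableSpace γ]
  {E : Type*} [NormedAddCommGroup E]

theorem const_mul_lintegral_div_mul_const {μ : Measure γ} {a : ℝ≥0∞} (ha : a ≠ ∞)
    {φ ψ : γ → ℝ≥0∞} (hφ : a = 0 → φ =ᵐ[μ] 0) :
    a * ∫⁻ c, φ c / (ψ c * a) ∂μ = ∫⁻ c, φ c / ψ c ∂μ := by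
  rcases eq_or_ne a 0 with rfl | ha0
  · have hφψ : (fun c => φ c / ψ c) =ᵐ[μ] 0 := (hφ rfl).mono fun c hc => by simp [hc]
    rw [zero_mul, lintegral_congr_ae hφψ, Pi.zero_def, lintegral_zero]
  · rw [← lintegral_const_mul' _ _ ha]
    congr with c
    rw [div_eq_mul_inv, div_eq_mul_inv, ENNReal.mul_inv (.inr ha) (.inr ha0)]
    calc a * (φ c * ((ψ c)⁻¹ * a⁻¹)) = a * a⁻¹ * (φ c * (ψ c)⁻¹) := by ring
      _ = φ c * (ψ c)⁻¹ := by rw [ENNReal.mul_inv_cancel ha0 ha, one_mul]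

theorem ae_lt_top_of_eq_withDensity {μ ν : Measure α} [IsFiniteMeasure ν] {f : α → ℝ≥0∞}
    (hf : Measurable f) (hν : ν = μ.withDensity f) : ∀ᵐ x ∂μ, f x < ∞ :=
  ae_lt_top hf <| by simpa [hν] using measure_ne_top ν .univ

theorem Measure.map_fst_withDensity_prod (μ : Measure α) [SFinite μ] (ν : Measure β) [SFinite ν]
    {f : α × β → ℝ≥0∞} (hf : Measurable f) :
    ((μ.prod ν).withDensity f).map Prod.fst = μ.withDensity fun a => ∫⁻ b, f (a, b) ∂ν := by
  ext s hs
  rw [Measure.map_apply measurable_fst hs, ← Set.prod_univ, withDensity_apply _ (hs.prod .univ),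
    withDensity_apply _ hs, ← Measure.prod_restrict, Measure.restrict_univ,
    lintegral_prod _ hf.aemeasurable]

theorem Measure.comp_eq_map_of_map_prod_apply_prod_univ {Ω : Type*} [MeasurableSpace Ω]
    {P : Measure Ω} {Y : Ω → α} {Z : Ω → γ} (hY : Measurable Y) (hZ : Measurable Z)
    (κ : Kernel γ α)
    (h : ∀ B, MeasurableSet B → P.map (fun ω => (Y ω, Z ω)) (B ×ˢ .univ) = ∫⁻ c, κ c B ∂P.map Z) :
    κ ∘ₘ P.map Z = P.map Y := by
  ext B hB
  rw [Measure.bind_apply hB κ.aemeasurable, ← h B hB, Measure.map_apply (hY.prodMk hZ)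
    (hB.prod .univ), Measure.map_apply hY hB, Set.mk_preimage_prod, Set.preimage_univ,
    Set.inter_univ]

theorem Measure.integral_comp [NormedSpace ℝ E] {μ : Measure α} {κ : Kernel α β} {f : β → E}
    (hf : Integrable f (κ ∘ₘ μ)) : ∫ y, f y ∂(κ ∘ₘ μ) = ∫ x, ∫ y, f y ∂κ x ∂μ := by
  rw [Measure.comp_eq_comp_const_apply] at hf ⊢
  rw [Kernel.integral_comp hf, Kernel.const_apply]

theorem ae_eq_of_forall_setIntegral_eq_of_integrable_right [NormedSpace ℝ E] [CompleteSpace E]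
    {μ : Measure α} [SigmaFinite μ] {f g : α → E} (hf : StronglyMeasurable f)
    (hg : Integrable g μ)
    (hfg : ∀ s, MeasurableSet s → μ s < ∞ → ∫ x in s, f x ∂μ = ∫ x in s, g x ∂μ) :
    f =ᵐ[μ] g := by
  set S : ℕ → Set α := fun N => {x | ‖f x‖ ≤ N}
  have hS (N : ℕ) : MeasurableSet (S N) := measurableSet_le hf.norm.measurable measurable_const
  have hS_univ : (⋃ N, S N) = Set.univ :=
    Set.eq_univ_of_forall fun x => Set.mem_iUnion.2 (exists_nat_ge ‖f x‖)
  suffices ∀ N, f =ᵐ[μ.restrict (S N)] g by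
    have h := (ae_restrict_iUnion_iff S fun x => f x = g x).2 this
    rwa [hS_univ, Measure.restrict_univ] at h
  intro N
  refine ae_eq_of_forall_setIntegral_eq_of_sigmaFinite (fun s _ hs => ?_)
    (fun s _ _ => hg.integrableOn.restrict) (fun s hs hμs => ?_)
  · exact .of_bound hs hf.aestronglyMeasurable N (ae_restrict_of_ae (ae_restrict_mem (hS N)))
  · rw [Measure.restrict_apply hs] at hμs
    rw [Measure.restrict_restrict hs]
    exact hfg _ (hs.inter (hS N)) hμs

theorem setIntegral_prod_univ_snd_withDensity [NormedSpace ℝ E] [MeasurableSpace E]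
    {μ₁ : Measure α} {μ : Measure E} [SFinite μ₁] [SFinite μ] {d : α × E → ℝ≥0∞}
    (hd : Measurable d) (hd_lt_top : ∀ᵐ p ∂μ₁.prod μ, d p < ∞)
    (hint : Integrable Prod.snd ((μ₁.prod μ).withDensity d)) {A : Set α} (hA : MeasurableSet A) :
    ∫ z in A ×ˢ .univ, z.2 ∂(μ₁.prod μ).withDensity d =
      ∫ a in A, ∫ x, (d (a, x)).toReal • x ∂μ ∂μ₁ := by
  rw [setIntegral_withDensity_eq_setIntegral_toReal_smul hd (ae_restrict_of_ae hd_lt_top) _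
    (hA.prod .univ), setIntegral_prod, Measure.restrict_univ]
  exact ((integrable_withDensity_iff_integrable_smul' hd hd_lt_top).1 hint).integrableOn

end MeasureTheory

namespace ProbabilityTheory

variable {α β γ : Type*} [MeasurableSpace α] [MeasurableSpace β] [MeasurableSpace γ]
  {E : Type*} [NormedAddCommGroup E] [MeasurableSpace E]

theorem Kernel.ae_mul_apply_eq_setLIntegral_of_withDensity_prod {ν : Measure β} [SFinite ν]
    {μ₃ : Measure γ} [SigmaFinite μ₃] {f₃ : γ → ℝ≥0∞} (hf₃ : Measurable f₃)
    {g : β × γ → ℝ≥0∞} (hg : Measurable g) {Q : Measure γ} (hQ : Q = μ₃.withDensity f₃)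
    {κ : Kernel γ β} {B : Set β} (hB : MeasurableSet B)
    (h : ∀ A, MeasurableSet A → (ν.prod μ₃).withDensity g (B ×ˢ A) = ∫⁻ c in A, κ c B ∂Q) :
    ∀ᵐ c ∂μ₃, f₃ c * κ c B = ∫⁻ b in B, g (b, c) ∂ν := by
  refine ae_eq_of_forall_setLIntegral_eq_of_sigmaFinite (hf₃.mul (κ.measurable_coe hB))
    (hg.lintegral_prod_left' (μ := ν.restrict B)) fun A hA _ => ?_
  rw [← Pi.mul_def, ← setLIntegral_withDensity_eq_setLIntegral_mul _ hf₃ (κ.measurable_coe hB) hA,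
    ← hQ, ← h A hA, withDensity_apply _ (hB.prod hA), ← Measure.prod_restrict,
    MeasureTheory.lintegral_prod_symm _ hg.aemeasurable]

noncomputable def mixtureDensity (μ₃ : Measure γ) (f₃ : γ → ℝ≥0∞) (f : α × γ → ℝ≥0∞)
    (g : β × γ → ℝ≥0∞) (p : α × β) : ℝ≥0∞ :=
  ∫⁻ c, g (p.2, c) * f (p.1, c) / f₃ c ∂μ₃

theorem measurable_mixtureDensity {μ₃ : Measure γ} [SFinite μ₃] {f₃ : γ → ℝ≥0∞}
    {f : α × γ → ℝ≥0∞} {g : β × γ → ℝ≥0∞} (hf₃ : Measurable f₃) (hf : Measurable f)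
    (hg : Measurable g) : Measurable (mixtureDensity μ₃ f₃ f g) :=
  Measurable.lintegral_prod_right'
    (f := fun q : (α × β) × γ => g (q.1.2, q.2) * f (q.1.1, q.2) / f₃ q.2) (by fun_prop)

theorem ae_toReal_smul_integral_eq_integral_mixtureDensity [NormedSpace ℝ E]
    {μ₁ : Measure α} [SigmaFinite μ₁] {μ₃ : Measure γ} [SFinite μ₃] {μ : Measure E}
    {f₁ : α → ℝ≥0∞} {f₃ : γ → ℝ≥0∞} {f : α × γ → ℝ≥0∞} {g : E × γ → ℝ≥0∞}
    (hf₁ : Measurable f₁) (hf : Measurable f) (hf₁_lt_top : ∀ᵐ a ∂μ₁, f₁ a < ∞)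
    (hmarg : ((μ₁.prod μ₃).withDensity f).map Prod.fst = μ₁.withDensity f₁) :
    ∀ᵐ a ∂μ₁,
      (f₁ a).toReal • ∫ x, (∫⁻ c, g (x, c) * f (a, c) / (f₃ c * f₁ a) ∂μ₃).toReal • x ∂μ =
        ∫ x, (mixtureDensity μ₃ f₃ f g (a, x)).toReal • x ∂μ := by
  have hf₁_eq : f₁ =ᵐ[μ₁] fun a => ∫⁻ c, f (a, c) ∂μ₃ := by
    rwa [← withDensity_eq_iff_of_sigmaFinite hf₁.aemeasurable (by fun_prop),
      ← Measure.map_fst_withDensity_prod _ _ hf, eq_comm]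
  filter_upwards [hf₁_eq, hf₁_lt_top] with a ha_eq ha_lt_top
  have hf_zero (x : E) : f₁ a = 0 → (fun c => g (x, c) * f (a, c)) =ᵐ[μ₃] 0 := fun ha0 => by
    rw [ha_eq, lintegral_eq_zero_iff (by fun_prop)] at ha0
    filter_upwards [ha0] with c hc
    simp [hc]
  rw [← integral_smul]
  congr with x
  rw [smul_smul, ← ENNReal.toReal_mul,
    const_mul_lintegral_div_mul_const ha_lt_top.ne (hf_zero x)]
  rfl

theorem Kernel.prod_comp_withDensity {μ₁ : Measure α} {μ : Measure β} {μ₃ : Measure γ}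
    [SFinite μ₁] [SFinite μ] [SigmaFinite μ₃] {f₃ : γ → ℝ≥0∞} {f : α × γ → ℝ≥0∞}
    {g : β × γ → ℝ≥0∞} (hf₃ : Measurable f₃) (hf : Measurable f) (hg : Measurable g)
    {Q : Measure γ} [IsFiniteMeasure Q] (hQ : Q = μ₃.withDensity f₃)
    (κ₁ : Kernel γ α) [IsFiniteKernel κ₁] (κ : Kernel γ β) [IsFiniteKernel κ]
    (hκ₁ : ∀ A A₃, MeasurableSet A → MeasurableSet A₃ →
      (μ₁.prod μ₃).withDensity f (A ×ˢ A₃) = ∫⁻ c in A₃, κ₁ c A ∂Q)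
    (hκ : ∀ B A₃, MeasurableSet B → MeasurableSet A₃ →
      (μ.prod μ₃).withDensity g (B ×ˢ A₃) = ∫⁻ c in A₃, κ c B ∂Q) :
    (κ₁ ×ₖ κ) ∘ₘ Q = (μ₁.prod μ).withDensity (mixtureDensity μ₃ f₃ f g) := by
  refine Measure.ext_prod fun {A B} hA hB => ?_
  have hfg : ∀ᵐ c ∂μ₃, f₃ c * (κ₁ c A * κ c B) =
      ∫⁻ p in A ×ˢ B, g (p.2, c) * f (p.1, c) / f₃ c ∂μ₁.prod μ := by
    filter_upwards [ae_lt_top_of_eq_withDensity hf₃ hQ,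
      ae_mul_apply_eq_setLIntegral_of_withDensity_prod hf₃ hf hQ hA (hκ₁ A · hA),
      ae_mul_apply_eq_setLIntegral_of_withDensity_prod hf₃ hg hQ hB (hκ B · hB)] with c hc h₁ h
    rw [ENNReal.mul_mul_eq_mul_mul_mul_inv hc.ne, h₁, h, ← Measure.prod_restrict,
      ← lintegral_prod_mul (by fun_prop) (by fun_prop), ← lintegral_mul_const _ (by fun_prop)]
    congr 1 with p
    rw [div_eq_mul_inv, mul_comm (g _)]
  rw [Measure.bind_apply (hA.prod hB) (Kernel.aemeasurable _), withDensity_apply _ (hA.prod hB), hQ]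
  simp_rw [Kernel.prod_apply_prod]
  rw [lintegral_withDensity_eq_lintegral_mul _ hf₃
    (g := fun c => κ₁ c A * κ c B) ((κ₁.measurable_coe hA).mul (κ.measurable_coe hB))]
  simp only [Pi.mul_apply]
  rw [lintegral_congr_ae hfg, lintegral_lintegral_swap (by fun_prop)]
  rfl

theorem Kernel.integrable_snd_prod_comp_iff [BorelSpace E] [SecondCountableTopology E]
    {Q : Measure γ} (κ₁ : Kernel γ α) [IsMarkovKernel κ₁] (κ : Kernel γ E) [IsSFiniteKernel κ] :
    Integrable Prod.snd ((κ₁ ×ₖ κ) ∘ₘ Q) ↔ Integrable id (κ ∘ₘ Q) := by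
  have h : ((κ₁ ×ₖ κ) ∘ₘ Q).map Prod.snd = κ ∘ₘ Q := by
    rw [Measure.map_comp _ _ measurable_snd, ← Kernel.snd_eq, Kernel.snd_prod]
  rw [← h, integrable_map_measure (by fun_prop) (by fun_prop)]
  rfl

theorem Kernel.integral_toReal_smul_integral_eq_setIntegral_prod_comp [NormedSpace ℝ E]
    {Q : Measure γ} (κ₁ : Kernel γ α) [IsSFiniteKernel κ₁] (κ : Kernel γ E) [IsSFiniteKernel κ]
    (hint : Integrable Prod.snd ((κ₁ ×ₖ κ) ∘ₘ Q)) {A : Set α}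
    (hA : MeasurableSet A) :
    ∫ c, (κ₁ c A).toReal • ∫ x, x ∂κ c ∂Q = ∫ z in A ×ˢ .univ, z.2 ∂(κ₁ ×ₖ κ) ∘ₘ Q := by
  rw [← integral_indicator (hA.prod .univ),
    Measure.integral_comp (hint.indicator (hA.prod .univ))]
  congr with c
  have hsplit (z : α × E) :
      (A ×ˢ .univ).indicator Prod.snd z = A.indicator (1 : α → ℝ) z.1 • z.2 := by
    by_cases hz : z.1 ∈ A <;> simp [Set.indicator, hz]
  simp_rw [Kernel.prod_apply, hsplit]
  rw [integral_prod_smul (A.indicator (1 : α → ℝ)) (fun x : E => x), integral_indicator_one hA,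
    measureReal_def]

end ProbabilityTheory

/-- Formula for `E(M|M₁)` in terms of densities: `E(M|M₁)(ω₁) =
∫ x ∫ g₃(x,ω₃) f₁₃(ω₁,ω₃) / (f₃(ω₃) f₁(ω₁)) dμ₃ dμ(x)`, `P^{X₁}`-a.s. -/
theorem stmt_13 {Ω Ω₁ Ω₃ : Type*} {𝒜 : MeasurableSpace Ω}
    {𝒜₁ : MeasurableSpace Ω₁} {𝒜₃ : MeasurableSpace Ω₃} {n : ℕ}
    (P : Measure Ω) [IsProbabilityMeasure P]
    (X : Ω → EuclideanSpace ℝ (Fin n)) (X₁ : Ω → Ω₁) (X₃ : Ω → Ω₃)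
    (hX : Measurable X) (hX₁ : Measurable X₁) (hX₃ : Measurable X₃)
    (hXint : Integrable X P)
    (μ : Measure (EuclideanSpace ℝ (Fin n))) [SigmaFinite μ]
    (μ₁ : Measure Ω₁) [SigmaFinite μ₁] (μ₃ : Measure Ω₃) [SigmaFinite μ₃]
    (f₁ : Ω₁ → ℝ≥0∞) (hf₁ : Measurable f₁)
    (f₃ : Ω₃ → ℝ≥0∞) (hf₃ : Measurable f₃)
    (f₁₃ : Ω₁ × Ω₃ → ℝ≥0∞) (hf₁₃ : Measurable f₁₃)
    (g₃ : EuclideanSpace ℝ (Fin n) × Ω₃ → ℝ≥0∞) (hg₃ : Measurable g₃)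
    (hd₁ : P.map X₁ = μ₁.withDensity f₁)
    (hd₃ : P.map X₃ = μ₃.withDensity f₃)
    (hd₁₃ : P.map (fun ω => (X₁ ω, X₃ ω)) = (μ₁.prod μ₃).withDensity f₁₃)
    (hdg₃ : P.map (fun ω => (X ω, X₃ ω)) = (μ.prod μ₃).withDensity g₃)
    (M : Kernel Ω₃ (EuclideanSpace ℝ (Fin n))) [IsMarkovKernel M]
    (M₁ : Kernel Ω₃ Ω₁) [IsMarkovKernel M₁]
    (hM : ∀ (B : Set (EuclideanSpace ℝ (Fin n))) (A₃ : Set Ω₃),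
      MeasurableSet B → MeasurableSet A₃ →
      P.map (fun ω => (X ω, X₃ ω)) (B ×ˢ A₃) = ∫⁻ ω₃ in A₃, M ω₃ B ∂(P.map X₃))
    (hM₁ : ∀ (A₁ : Set Ω₁) (A₃ : Set Ω₃), MeasurableSet A₁ → MeasurableSet A₃ →
      P.map (fun ω => (X₁ ω, X₃ ω)) (A₁ ×ˢ A₃) = ∫⁻ ω₃ in A₃, M₁ ω₃ A₁ ∂(P.map X₃))
    -- e is (a version of) E(M|M₁), defined w.r.t. Q = P^{X₃}
    (e : Ω₁ → EuclideanSpace ℝ (Fin n)) (hem : Measurable e)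
    (he : ∀ A₁ : Set Ω₁, MeasurableSet A₁ →
      ∫ ω₃, (M₁ ω₃ A₁).toReal • (∫ x, x ∂(M ω₃)) ∂(P.map X₃) =
        ∫ ω₁ in A₁, e ω₁ ∂((P.map X₃).bind (fun ω₃ => M₁ ω₃))) :
    ∀ᵐ ω₁ ∂(P.map X₁),
      e ω₁ = ∫ x, (∫⁻ ω₃, g₃ (x, ω₃) * f₁₃ (ω₁, ω₃) / (f₃ ω₃ * f₁ ω₁) ∂μ₃).toReal • x ∂μ := by
  have hbind₁ : M₁ ∘ₘ P.map X₃ = P.map X₁ :=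
    Measure.comp_eq_map_of_map_prod_apply_prod_univ hX₁ hX₃ M₁ fun A hA => by
      simpa using hM₁ A .univ hA .univ
  have hbind : M ∘ₘ P.map X₃ = P.map X :=
    Measure.comp_eq_map_of_map_prod_apply_prod_univ hX hX₃ M fun B hB => by
      simpa using hM B .univ hB .univ
  have hπ : (M₁ ×ₖ M) ∘ₘ P.map X₃ = (μ₁.prod μ).withDensity (mixtureDensity μ₃ f₃ f₁₃ g₃) :=
    Kernel.prod_comp_withDensity hf₃ hf₁₃ hg₃ hd₃ M₁ M (hd₁₃ ▸ hM₁) (hdg₃ ▸ hM)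
  have hint : Integrable Prod.snd ((M₁ ×ₖ M) ∘ₘ P.map X₃) := by
    rwa [Kernel.integrable_snd_prod_comp_iff, hbind,
      integrable_map_measure (by fun_prop) hX.aemeasurable]
  have hd := measurable_mixtureDensity (μ₃ := μ₃) hf₃ hf₁₃ hg₃
  have hd_lt_top := ae_lt_top_of_eq_withDensity hd hπ
  have hf₁_lt_top := ae_lt_top_of_eq_withDensity hf₁ hd₁
  have hmarg : ((μ₁.prod μ₃).withDensity f₁₃).map Prod.fst = μ₁.withDensity f₁ := by
    rw [← hd₁₃, ← hd₁, Measure.map_map measurable_fst (hX₁.prodMk hX₃)]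
    rfl
  have hfd := ae_toReal_smul_integral_eq_integral_mixtureDensity (μ := μ) (f₃ := f₃) (g := g₃)
    hf₁ hf₁₃ hf₁_lt_top hmarg
  refine ae_eq_of_forall_setIntegral_eq_of_integrable_right hem.stronglyMeasurable ?_
    fun A hA _ => ?_
  · rw [hd₁, integrable_withDensity_iff_integrable_smul' hf₁ hf₁_lt_top]
    exact ((integrable_withDensity_iff_integrable_smul' hd hd_lt_top).1
      (hπ ▸ hint)).integral_prod_left.congr (hfd.mono fun _ h => h.symm)
  · rw [← hbind₁, ← he A hA,
      Kernel.integral_toReal_smul_integral_eq_setIntegral_prod_comp M₁ M hint hA, hπ,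
      setIntegral_prod_univ_snd_withDensity hd hd_lt_top (hπ ▸ hint) hA, hbind₁, hd₁,
      setIntegral_withDensity_eq_setIntegral_toReal_smul' _ hf₁ (ae_restrict_of_ae hf₁_lt_top)]
    exact setIntegral_congr_ae hA (hfd.mono fun _ h _ => h.symm)
end
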